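/- arXiv:2301.11849 — 4 statements merged into one kernel-verified Lean document; each statement's English description precedes it below -/
import Mathlib

section
/- The binary public goods game on an undirected simple graph G with player-specific decreasing best-response patterns T^i = 1^{k_i}0^* (k_i ≥ 1) always admits a pure Nash equilibrium; specifically, there exists a strategy profile s ∈ {0,1}^V such that every vertex v is active (s_v = 1) if and only if its number of active neighbors is strictly less than k_v. -/
/-!
The game is an exact potential game. For a set `S` of active vertices put
`Φ(S) = ∑_{v ∈ S} (2 k_v - 1) - ∑_{v ∈ S} #(neighbours of v in S)`;
activating a vertex `v ∉ S` changes `Φ` by `2 k_v - 1 - 2 #(neighbours of v in S)`, which is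
positive exactly when `v` prefers to be active. A maximiser of `Φ` is therefore an equilibrium.
-/

open Finset

namespace SimpleGraph

variable {V : Type*} [DecidableEq V] (G : SimpleGraph V) [DecidableRel G.Adj]

/-- The `- 1` makes every change of the potential under activating a vertex odd, hence
nonzero, so a maximiser needs no tie-breaking. -/
def publicGoodsPotential (k : V → ℕ) (S : Finset V) : ℤ :=
  ∑ v ∈ S, ((2 * k v - 1 : ℤ) - #(S.filter (G.Adj v)))

variable {G}

lemma card_filter_adj_insert {S : Finset V} {v : V} (hv : v ∉ S) (u : V) :
    #((insert v S).filter (G.Adj u)) = #(S.filter (G.Adj u)) + if G.Adj u v then 1 else 0 := by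
  rw [filter_insert]
  split_ifs
  · exact card_insert_of_notMem fun h => hv (mem_filter.1 h).1
  · rfl

lemma card_filter_adj_erase (S : Finset V) (v : V) :
    #((S.erase v).filter (G.Adj v)) = #(S.filter (G.Adj v)) := by
  rw [filter_erase, erase_eq_of_notMem fun h => G.irrefl (mem_filter.1 h).2]

lemma publicGoodsPotential_insert (k : V → ℕ) {S : Finset V} {v : V} (hv : v ∉ S) :
    G.publicGoodsPotential k (insert v S) =
      G.publicGoodsPotential k S + (2 * k v - 1) - 2 * #(S.filter (G.Adj v)) := by
  have hcount : ∑ u ∈ S, (if G.Adj u v then 1 else 0 : ℤ) = #(S.filter (G.Adj v)) := by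
    simp only [sum_boole, G.adj_comm]
  simp only [publicGoodsPotential, sum_insert hv, card_filter_adj_insert hv, G.irrefl,
    if_false, Nat.cast_add, Nat.cast_ite, Nat.cast_one, Nat.cast_zero, sub_add_eq_sub_sub,
    sum_sub_distrib, hcount]
  ring

lemma mem_iff_card_filter_adj_lt_of_forall_potential_le (k : V → ℕ) {S : Finset V}
    (hS : ∀ T, G.publicGoodsPotential k T ≤ G.publicGoodsPotential k S) (v : V) :
    v ∈ S ↔ #(S.filter (G.Adj v)) < k v := by
  by_cases hv : v ∈ S
  · have hle := hS (S.erase v)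
    have hstep := publicGoodsPotential_insert (G := G) k (notMem_erase v S)
    rw [insert_erase hv, card_filter_adj_erase] at hstep
    simp only [hv, true_iff]
    omega
  · have hle := hS (insert v S)
    rw [publicGoodsPotential_insert k hv] at hle
    simp only [hv, false_iff, not_lt]
    omega

theorem exists_forall_mem_iff_card_filter_adj_lt [Fintype V] (k : V → ℕ) :
    ∃ S : Finset V, ∀ v, v ∈ S ↔ #(S.filter (G.Adj v)) < k v := by
  obtain ⟨S, -, hS⟩ := exists_max_image univ (G.publicGoodsPotential k) univ_nonempty
  exact ⟨S, mem_iff_card_filter_adj_lt_of_forall_potential_le k fun T => hS T (mem_univ T)⟩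

end SimpleGraph

theorem stmt3_general (V : Type) [Fintype V] [DecidableEq V]
    (G : SimpleGraph V) [DecidableRel G.Adj]
    (k : V → ℕ) :
    ∃ s : V → Bool, ∀ v : V,
      s v = true ↔ ((G.neighborFinset v).filter (fun u => s u = true)).card < k v := by
  obtain ⟨S, hS⟩ := G.exists_forall_mem_iff_card_filter_adj_lt k
  refine ⟨fun v => decide (v ∈ S), fun v => ?_⟩
  have hactive : (G.neighborFinset v).filter (fun u => decide (u ∈ S) = true) = S.filter (G.Adj v) := by
    ext u
    simp [and_comm]
  rw [hactive, decide_eq_true_iff]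
  exact hS v

/-- The binary public goods game on an undirected simple graph with decreasing
patterns `T^v = 1^{k_v}0^*` (`k_v ≥ 1`) always admits a pure Nash equilibrium:
there is a profile in which a vertex is active iff its number of active
neighbors is strictly less than its threshold. -/
theorem stmt3 (V : Type) [Fintype V] [DecidableEq V]
    (G : SimpleGraph V) [DecidableRel G.Adj]
    (k : V → ℕ) (hk : ∀ v, 1 ≤ k v) :
    ∃ s : V → Bool, ∀ v : V,
      s v = true ↔ ((G.neighborFinset v).filter (fun u => s u = true)).card < k v :=
  stmt3_general V G k
end

section
/- (Safety transfer lemma) Let G_∘ = (V_∘, E_∘) be a graph gadget with operand vertices X ⊆ V_∘ and membrane vertices M = N_{G_∘}(X), such that for every graph G' = (V', E') with V' ∩ V_∘ = X, every pure Nash equilibrium s of the binary public goods game (with a fixed common pattern T) on (V' ∪ V_∘, E' ∪ E_∘) satisfies s_m = 0 for all m ∈ M. If G = (V, E) is a graph with V ∩ V_∘ = X that admits no pure Nash equilibrium, then the union graph H = (V ∪ V_∘, E ∪ E_∘) also admits no pure Nash equilibrium. -/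
/-- Number of active neighbors of `v` w.r.t. adjacency `Adj` in profile `s`. -/
noncomputable def degA {Ω : Type} (Adj : Ω → Ω → Prop) (s : Ω → Bool) (v : Ω) : ℕ :=
  Set.ncard {u | Adj v u ∧ s u = true}

/-- Pure Nash equilibrium of the binary public goods game with pattern `T`. -/
def isPNE {Ω : Type} (T : ℕ → Bool) (Adj : Ω → Ω → Prop) (s : Ω → Bool) : Prop :=
  ∀ v, s v = T (degA Adj s v)

/-- The union graph `H = G ∪ G_∘` of an external graph `G` on vertex type `W`
(sharing exactly the operand vertices, which are the `ι`-images of `XT`)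
with a gadget whose internal vertices form the type `I`: gadget-internal
adjacency is `AdjII`, and internal vertices are attached to operands via `AdjIX`. -/
def unionAdj {W I XT : Type} (AdjW : W → W → Prop) (ι : XT → W)
    (AdjIX : I → XT → Prop) (AdjII : I → I → Prop) :
    (W ⊕ I) → (W ⊕ I) → Prop
  | Sum.inl a, Sum.inl b => AdjW a b
  | Sum.inl a, Sum.inr i => ∃ x, a = ι x ∧ AdjIX i x
  | Sum.inr i, Sum.inl a => ∃ x, a = ι x ∧ AdjIX i x
  | Sum.inr i, Sum.inr j => AdjII i j

/-! Safety keeps every membrane vertex inactive in a PNE of `H`, so an external vertex has the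
same active neighbours in `H` as in `G`; the restriction of a PNE of `H` to `V` is therefore a
PNE of `G`. -/

section UnionGraph

variable {W I XT : Type} {AdjW : W → W → Prop} {ι : XT → W} {AdjIX : I → XT → Prop}
  {AdjII : I → I → Prop} {s : W ⊕ I → Bool}

theorem activeNeighbors_unionAdj_inl
    (hoff : ∀ i x, AdjIX i x → s (Sum.inr i) = false) (v : W) :
    {u | unionAdj AdjW ι AdjIX AdjII (Sum.inl v) u ∧ s u = true}
      = Sum.inl '' {u | AdjW v u ∧ s (Sum.inl u) = true} := by
  ext u
  rcases u with a | i
  · simp [unionAdj]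
  · simp only [unionAdj, Set.mem_ofPred_eq, Set.mem_image, reduceCtorEq, and_false,
      exists_false, iff_false, not_and]
    rintro ⟨x, -, hix⟩
    simp [hoff i x hix]

theorem degA_unionAdj_inl (hoff : ∀ i x, AdjIX i x → s (Sum.inr i) = false) (v : W) :
    degA (unionAdj AdjW ι AdjIX AdjII) s (Sum.inl v) = degA AdjW (s ∘ Sum.inl) v := by
  rw [degA, activeNeighbors_unionAdj_inl hoff, Set.ncard_image_of_injective _ Sum.inl_injective]
  rfl

theorem isPNE_comp_inl (T : ℕ → Bool) (hs : isPNE T (unionAdj AdjW ι AdjIX AdjII) s)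
    (hoff : ∀ i x, AdjIX i x → s (Sum.inr i) = false) :
    isPNE T AdjW (s ∘ Sum.inl) := fun v => by
  rw [← degA_unionAdj_inl hoff]
  exact hs (Sum.inl v)

end UnionGraph

theorem stmt6_general {I XT : Type}
    (T : ℕ → Bool)
    (AdjII : I → I → Prop)
    (AdjIX : I → XT → Prop)
    (M : Set I) (hM : M = {i : I | ∃ x, AdjIX i x})
    (hsafe : ∀ (W : Type) (_ : Fintype W) (ι : XT → W), Function.Injective ι →
      ∀ AdjW : W → W → Prop, Symmetric AdjW → Irreflexive AdjW →
        ∀ s : W ⊕ I → Bool, isPNE T (unionAdj AdjW ι AdjIX AdjII) s →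
          ∀ m ∈ M, s (Sum.inr m) = false)
    (V : Type) [Fintype V] (ι : XT → V) (hι : Function.Injective ι)
    (AdjV : V → V → Prop) (hsymV : Symmetric AdjV) (hirrV : Irreflexive AdjV)
    (hnoPNE : ¬ ∃ s : V → Bool, isPNE T AdjV s) :
    ¬ ∃ s : V ⊕ I → Bool, isPNE T (unionAdj AdjV ι AdjIX AdjII) s := by
  rintro ⟨s, hs⟩
  have hmembrane := hsafe V inferInstance ι hι AdjV hsymV hirrV s hs
  subst hM
  exact hnoPNE ⟨s ∘ Sum.inl, isPNE_comp_inl T hs fun i x hix => hmembrane i ⟨x, hix⟩⟩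

/-- Safety transfer lemma: if a gadget (internal vertices `I`, operand vertices `XT`,
membrane vertices `M` = internals adjacent to an operand) is safe, i.e. in every PNE
of its union with an arbitrary external graph all membrane vertices are inactive,
then attaching the gadget to a graph `G` that admits no PNE yields a union graph `H`
that admits no PNE either. -/
theorem stmt6 {I XT : Type} [Fintype I] [Fintype XT] [DecidableEq XT]
    (T : ℕ → Bool)
    (AdjII : I → I → Prop) (hsymI : Symmetric AdjII) (hirrI : Irreflexive AdjII)
    (AdjIX : I → XT → Prop)
    (M : Set I) (hM : M = {i : I | ∃ x, AdjIX i x})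
    (hsafe : ∀ (W : Type) (_ : Fintype W) (ι : XT → W), Function.Injective ι →
      ∀ AdjW : W → W → Prop, Symmetric AdjW → Irreflexive AdjW →
        ∀ s : W ⊕ I → Bool, isPNE T (unionAdj AdjW ι AdjIX AdjII) s →
          ∀ m ∈ M, s (Sum.inr m) = false)
    (V : Type) [Fintype V] (ι : XT → V) (hι : Function.Injective ι)
    (AdjV : V → V → Prop) (hsymV : Symmetric AdjV) (hirrV : Irreflexive AdjV)
    (hnoPNE : ¬ ∃ s : V → Bool, isPNE T AdjV s) :
    ¬ ∃ s : V ⊕ I → Bool, isPNE T (unionAdj AdjV ι AdjIX AdjII) s :=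
  stmt6_general T AdjII AdjIX M hM hsafe V ι hι AdjV hsymV hirrV hnoPNE
end

section
/- In the edge-weighted binary public goods game on a graph G = (V,E) with integer edge weights w_e ≥ 1 and patterns T^v = 1^{k_v}0^* (k_v ≥ 1), there always exists a pure Nash equilibrium: a profile s ∈ {0,1}^V such that s_v = 1 iff Σ_{u ∈ N(v)} w_{{u,v}} s_u ≤ k_v - 1, for all v. -/
/-!
With `A_S(v) = ∑_{u ∈ S} a v u` for a symmetric interaction `a` with zero diagonal, the function
`Φ(S) = ∑_{u,v ∈ S} a u v - ∑_{v ∈ S} c v` changes by `±(2 A_S(v) - c v)` when `v` enters or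
leaves `S`. Hence a global minimiser of `Φ` is stable under every single flip, and taking
`c v = 2 (k v - 1) + 1` turns stability into the best-response condition of the game.
-/

open Finset

section QuadraticPotential

variable {V R : Type*} [DecidableEq V] [CommRing R]
  (a : V → V → R) (c : V → R)

def quadraticPotential (S : Finset V) : R :=
  ∑ u ∈ S, ∑ v ∈ S, a u v - ∑ v ∈ S, c v

variable {a}

theorem quadraticPotential_insert (hsymm : ∀ u v, a u v = a v u) (hdiag : ∀ v, a v v = 0)
    {S : Finset V} {v : V} (hv : v ∉ S) :
    quadraticPotential a c (insert v S) =
      quadraticPotential a c S + (2 * ∑ u ∈ S, a v u - c v) := by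
  have hcol : ∑ u ∈ S, a u v = ∑ u ∈ S, a v u := sum_congr rfl fun u _ => hsymm u v
  simp only [quadraticPotential, sum_insert hv, hdiag, sum_add_distrib, hcol]
  ring

theorem quadraticPotential_erase (hsymm : ∀ u v, a u v = a v u) (hdiag : ∀ v, a v v = 0)
    {S : Finset V} {v : V} (hv : v ∈ S) :
    quadraticPotential a c S =
      quadraticPotential a c (S.erase v) + (2 * ∑ u ∈ S, a v u - c v) := by
  rw [← sum_erase S (hdiag v), ← quadraticPotential_insert c hsymm hdiag (S.notMem_erase v),
    insert_erase hv]

theorem exists_quadraticPotential_stable [Fintype V] [LinearOrder R] [IsStrictOrderedRing R]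
    (hsymm : ∀ u v, a u v = a v u) (hdiag : ∀ v, a v v = 0) :
    ∃ S : Finset V, ∀ v,
      (v ∈ S → 2 * ∑ u ∈ S, a v u ≤ c v) ∧ (v ∉ S → c v ≤ 2 * ∑ u ∈ S, a v u) := by
  obtain ⟨S, -, hmin⟩ := exists_min_image univ (quadraticPotential a c) univ_nonempty
  refine ⟨S, fun v => ⟨fun hv => ?_, fun hv => ?_⟩⟩
  · have := hmin (S.erase v) (mem_univ _)
    rw [quadraticPotential_erase c hsymm hdiag hv] at this
    linarith
  · have := hmin (insert v S) (mem_univ _)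
    rw [quadraticPotential_insert c hsymm hdiag hv] at this
    linarith

end QuadraticPotential

-- With the odd thresholds `c v = 2 θ v + 1`, the non-strict stability inequalities are strict on
-- one side.
theorem exists_threshold_equilibrium {V : Type*} [Fintype V] [DecidableEq V] {a : V → V → ℤ}
    (hsymm : ∀ u v, a u v = a v u) (hdiag : ∀ v, a v v = 0) (θ : V → ℤ) :
    ∃ S : Finset V, ∀ v, v ∈ S ↔ ∑ u ∈ S, a v u ≤ θ v := by
  obtain ⟨S, hS⟩ := exists_quadraticPotential_stable (fun v => 2 * θ v + 1) hsymm hdiag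
  refine ⟨S, fun v => ⟨fun hv => ?_, fun hle => ?_⟩⟩
  · linarith [(hS v).1 hv]
  · by_contra hv
    linarith [(hS v).2 hv]

theorem SimpleGraph.cast_sum_neighborFinset_indicator {V : Type*} [Fintype V] [DecidableEq V]
    (G : SimpleGraph V) [DecidableRel G.Adj] (w : V → V → ℕ) (S : Finset V) (v : V) :
    ((∑ u ∈ G.neighborFinset v, w v u * (if u ∈ S then 1 else 0) : ℕ) : ℤ) =
      ∑ u ∈ S, if G.Adj v u then (w v u : ℤ) else 0 := by
  rw [G.neighborFinset_eq_filter, sum_filter, ← sum_subset (subset_univ S)]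
  · push_cast
    exact sum_congr rfl fun u hu => by simp [hu]
  · intro u _ hu
    simp [hu]

theorem stmt16_general (V : Type) [Fintype V]
    (G : SimpleGraph V) [DecidableRel G.Adj]
    (w : V → V → ℕ) (hwsym : ∀ u v, w u v = w v u)
    (k : V → ℕ) :
    ∃ s : V → Bool, ∀ v : V,
      s v = true ↔
        (∑ u ∈ G.neighborFinset v, w v u * (if s u = true then 1 else 0)) ≤ k v - 1 := by
  classical
  obtain ⟨S, hS⟩ :=
    exists_threshold_equilibrium (a := fun v u => if G.Adj v u then (w v u : ℤ) else 0)
    (fun u v => by simp only [G.adj_comm u v, hwsym u v]) (fun v => by simp)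
    (fun v => ((k v - 1 : ℕ) : ℤ))
  refine ⟨fun v => decide (v ∈ S), fun v => ?_⟩
  simp only [decide_eq_true_eq]
  rw [hS v, ← G.cast_sum_neighborFinset_indicator, Nat.cast_le]

/-- The edge-weighted binary public goods game on an undirected graph with integer
edge weights `w ≥ 1` and decreasing patterns `T^v = 1^{k_v}0^*` always admits a
pure Nash equilibrium: a profile in which `v` is active iff the weighted sum of its
active neighbors is at most `k_v - 1`. -/
theorem stmt16 (V : Type) [Fintype V] [DecidableEq V]
    (G : SimpleGraph V) [DecidableRel G.Adj]
    (w : V → V → ℕ) (hwsym : ∀ u v, w u v = w v u)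
    (hw1 : ∀ u v, G.Adj u v → 1 ≤ w u v)
    (k : V → ℕ) (hk : ∀ v, 1 ≤ k v) :
    ∃ s : V → Bool, ∀ v : V,
      s v = true ↔
        (∑ u ∈ G.neighborFinset v, w v u * (if s u = true then 1 else 0)) ≤ k v - 1 :=
  stmt16_general V G w hwsym k
end

section
/- Let s be a pure Nash equilibrium of the edge-weighted binary public goods game on the complete graph on [n] with integer edge weights a_{i,j} ≥ 1 and patterns T^i = 1^{⌊θ_i⌋}0^* for reals θ_i > 0. Define a profile of the threshold game by assigning player i the strategy s_i^out (utility -θ_i) if s_i = 0, and the strategy s_i^in (utility -Σ_{j ≠ i} a_{i,j} s_j) if s_i = 1. Then this profile is a pure Nash equilibrium of the threshold game, i.e., no player can strictly increase its utility by switching between s_i^out and s_i^in. -/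
def wSum {n : ℕ} (a : Fin n → Fin n → ℕ) (s : Fin n → Bool) (i : Fin n) : ℚ :=
  ∑ j ∈ Finset.univ.erase i, (a i j : ℚ) * (if s j = true then 1 else 0)

lemma wSum_eq_natCast {n : ℕ} (a : Fin n → Fin n → ℕ) (s : Fin n → Bool) (i : Fin n) :
    wSum a s i = ((∑ j ∈ Finset.univ.erase i, a i j * (if s j = true then 1 else 0) : ℕ) : ℚ) := by
  push_cast [wSum]
  rfl

/-- Integer weights make the active sum integral, so once it exceeds `⌊θ⌋` it is at least
`⌊θ⌋ + 1 > θ`. -/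
lemma lt_wSum_of_floor_lt {n : ℕ} (a : Fin n → Fin n → ℕ) (s : Fin n → Bool) (i : Fin n)
    {θ : ℚ} (h : (⌊θ⌋ : ℚ) < wSum a s i) : θ < wSum a s i := by
  rw [wSum_eq_natCast] at h ⊢
  exact_mod_cast Int.floor_lt.mp (by exact_mod_cast h)

theorem stmt17_general (n : ℕ) (a : Fin n → Fin n → ℕ)
    (θ : Fin n → ℚ)
    (hθnotint : ∀ i, (⌊θ i⌋ : ℚ) < θ i)
    (s : Fin n → Bool)
    (hPNE : ∀ i, s i = true ↔ wSum a s i ≤ (⌊θ i⌋ : ℚ)) :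
    ∀ i : Fin n,
      (s i = false → -θ i ≥ -(wSum a s i)) ∧
      (s i = true → -(wSum a s i) ≥ -θ i) := by
  intro i
  refine ⟨fun hout => ?_, fun hin => ?_⟩
  · have hgt : (⌊θ i⌋ : ℚ) < wSum a s i :=
      not_le.mp fun hle => by simp [(hPNE i).mpr hle] at hout
    exact neg_le_neg (lt_wSum_of_floor_lt a s i hgt).le
  · exact neg_le_neg (((hPNE i).mp hin).trans (hθnotint i).le)

/-- A PNE of the edge-weighted binary public goods game on the complete graph on `[n]`
(weights `a_{i,j} ≥ 1`, patterns `T^i = 1^{⌊θ_i⌋}0^*` with non-integral `θ_i > 0`,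
so `i` is active iff its weighted active-neighbor sum is at most `⌊θ_i⌋`) induces a
PNE of the threshold game: a player on `s_i^out` (utility `-θ_i`) cannot profit by
switching to `s_i^in` (utility `-Σ_{j≠i} a_{i,j} s_j`), and vice versa. -/
theorem stmt17 (n : ℕ) (a : Fin n → Fin n → ℕ)
    (hsym : ∀ i j, a i j = a j i) (ha : ∀ i j, i ≠ j → 1 ≤ a i j)
    (θ : Fin n → ℚ) (hθpos : ∀ i, 0 < θ i)
    (hθnotint : ∀ i, (⌊θ i⌋ : ℚ) < θ i)
    (s : Fin n → Bool)
    (hPNE : ∀ i, s i = true ↔ wSum a s i ≤ (⌊θ i⌋ : ℚ)) :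
    ∀ i : Fin n,
      (s i = false → -θ i ≥ -(wSum a s i)) ∧
      (s i = true → -(wSum a s i) ≥ -θ i) :=
  stmt17_general n a θ hθnotint s hPNE
end
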